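/- In the shock-surface setting, fix η ≠ 0, assume B > 0, and set N̄₀ := η R (A/(1 − k r²)) (E/C) (ψ C)⁻¹. Then for all real numbers p, p̄, ρ̄: (p − p̄)·η²R²/(1 − kr²) − (ρ̄ + p̄)·N̄₀²/B = η²R²·( (p + ρ̄)/(1 − kr²) − (p̄ + ρ̄)/A ). (Consequently, the conservation condition [T^{αβ}N_αN_β] = 0 for the matched perfect-fluid stress-energy tensors, with the fluids comoving on each side, is equivalent to (p + ρ̄)/(1 − kr²) = (p̄ + ρ̄)/A.) -/
import Mathlib


open Real

/-- on the FRW/TOV shock surface, the jump `[T^{αβ}N_αN_β]` for the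
matched comoving perfect fluids equals `η²R²((p + ρ̄)/(1 − kr²) − (p̄ + ρ̄)/A)`;
consequently the conservation condition `[T^{αβ}N_αN_β] = 0` is equivalent to
`(p + ρ̄)/(1 − kr²) = (p̄ + ρ̄)/A`. -/
theorem stmt_19 (𝒢 k ρ R Rdot r rb M A C E ψ B η : ℝ)
    (h𝒢 : 0 < 𝒢) (hR : 0 < R) (hkr : 1 - k * r ^ 2 ≠ 0)
    (hrb : rb = R * r) (hrb0 : rb ≠ 0)
    (hFried : Rdot ^ 2 + k = 8 * π * 𝒢 / 3 * ρ * R ^ 2)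
    (hM : M = 4 * π / 3 * ρ * rb ^ 3)
    (hA : A = 1 - 2 * 𝒢 * M / rb) (hA0 : A ≠ 0)
    (hC : C = R ^ 2 * (1 - 8 * π * 𝒢 / 3 * ρ * R ^ 2 * r ^ 2))
    (hE : E = -(R * Rdot * rb))
    (hψ : ψ ≠ 0)
    (hmatch : B * (R ^ 2 - k * rb ^ 2) * ψ ^ 2 * C = 1)
    (hη : η ≠ 0) (hB : 0 < B) :
    ∀ p pb ρb : ℝ,
      (p - pb) * η ^ 2 * R ^ 2 / (1 - k * r ^ 2) -
          (ρb + pb) * (η * R * (A / (1 - k * r ^ 2)) * (E / C) * (ψ * C)⁻¹) ^ 2 / B =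
        η ^ 2 * R ^ 2 * ((p + ρb) / (1 - k * r ^ 2) - (pb + ρb) / A) := by
  intro p pb ρb
  have hR0 : R ≠ 0 := ne_of_gt hR
  have hRr : R * r ≠ 0 := hrb ▸ hrb0
  have hA' : A = 1 - 8 * π * 𝒢 / 3 * ρ * R ^ 2 * r ^ 2 := by
    rw [hA, hM, hrb]; field_simp; ring
  have hC' : C = R ^ 2 * A := by rw [hC, hA']
  have hC0 : C ≠ 0 := by rw [hC']; exact mul_ne_zero (pow_ne_zero 2 hR0) hA0
  have hB0 : B ≠ 0 := ne_of_gt hB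
  have hRdot : Rdot ^ 2 = 8 * π * 𝒢 / 3 * ρ * R ^ 2 - k := by linarith
  have key : r ^ 2 * Rdot ^ 2 = (1 - k * r ^ 2) - A := by
    rw [hA']; linear_combination r ^ 2 * hRdot
  have hBinv : (R ^ 2 - k * rb ^ 2) * ψ ^ 2 * C = B⁻¹ :=
    eq_inv_of_mul_eq_one_left (by linear_combination hmatch)
  have hN : (η * R * (A / (1 - k * r ^ 2)) * (E / C) * (ψ * C)⁻¹) ^ 2 / B
      = η ^ 2 * R ^ 2 * ((1 - k * r ^ 2) - A) / ((1 - k * r ^ 2) * A) := by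
    rw [div_eq_mul_inv, ← hBinv, hE, hC', hrb, ← key]
    field_simp
  rw [mul_div_assoc (ρb + pb), hN]
  field_simp
  ring
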